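/- Let $u, v \in L^2(\mathbb{R}^d)$ be band-limited with $\mathrm{supp}\,\hat{u}, \mathrm{supp}\,\hat{v} \subseteq [-1/2,1/2]^d$, and suppose $w := u \cdot v$ (pointwise product) vanishes on the lattice $D[2\mathbf{s}]^{-1}\mathbb{Z}^d$ with all $s_j \geq 1$. Then $u = 0$ or $v = 0$. -/

import Mathlib

open MeasureTheory Real Filter
open scoped FourierTransform ENNReal Topology

noncomputable section

abbrev Ed (d : ℕ) := EuclideanSpace ℝ (Fin d)

def latticePt (d : ℕ) (s : Fin d → ℝ) (n : Fin d → ℤ) : Ed d :=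
  (WithLp.equiv 2 (Fin d → ℝ)).symm fun j => (n j : ℝ) / (2 * s j)

def latticePtM (d : ℕ) (M : Matrix (Fin d) (Fin d) ℝ) (s : Fin d → ℝ) (n : Fin d → ℤ) : Ed d :=
  (WithLp.equiv 2 (Fin d → ℝ)).symm ((M.transpose)⁻¹.mulVec fun j => (n j : ℝ) / (2 * s j))

/-!
The spectrum of `w = u v` is the convolution `W = U ⋆ V`, an integrable function supported in the
cube `[-1, 1]ᵈ`. Since `sⱼ ≥ 1`, this cube lies in one period cell of the lattice `∏ⱼ 2 sⱼ ℤ` up to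
the cell's boundary, a null set, so the samples `w (n / 2s)` are the Fourier coefficients of the
periodization of `W`. They all vanish, and trigonometric polynomials are dense in the continuous
functions on the torus, so `W = 0` almost everywhere and `u v ≡ 0`. Finally, the Fourier inverse of
a compactly supported integrable function extends to an entire function along every complex line.
If `u a ≠ 0`, then `v` vanishes near `a` on the line from `a` to any `b`, hence at `b` by the
identity theorem.
-/

open scoped Convolution Pointwise

lemma fourierInv_mul_convolution_eq {E : Type*} [NormedAddCommGroup E] [InnerProductSpace ℝ E]
    [FiniteDimensional ℝ E] [MeasurableSpace E] [BorelSpace E] {f g : E → ℂ}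
    (hf : Integrable f) (hg : Integrable g) (x : E) :
    𝓕⁻ (f ⋆[ContinuousLinearMap.mul ℂ ℂ] g) x = 𝓕⁻ f x * 𝓕⁻ g x := by
  simp only [fourierInv_eq_fourier_neg, fourier_mul_convolution_eq hf hg]

section Boxes

variable {d : ℕ}

def closedBox (r : Fin d → ℝ) : Set (Ed d) := {ξ | ∀ j, |ξ j| ≤ r j}

def openBox (r : Fin d → ℝ) : Set (Ed d) := {ξ | ∀ j, |ξ j| < r j}

lemma support_subset_closedBox {M : Type*} [Zero M] {W : Ed d → M} {r : ℝ}
    (h : ∀ ξ : Ed d, (∃ j, r < |ξ j|) → W ξ = 0) : Function.support W ⊆ closedBox fun _ => r :=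
  fun ξ hξ j => not_lt.1 fun hj => hξ (h ξ ⟨j, hj⟩)

lemma add_closedBox_subset (a b : Fin d → ℝ) :
    closedBox a + closedBox b ⊆ closedBox (a + b) := by
  rintro _ ⟨ξ, hξ, η, hη, rfl⟩ j
  exact (abs_add_le _ _).trans (add_le_add (hξ j) (hη j))

lemma isOpen_openBox (r : Fin d → ℝ) : IsOpen (openBox r) := by
  simp only [openBox, Set.ofPred_forall]
  exact isOpen_iInter_of_finite fun j =>
    isOpen_lt (continuous_abs.comp (EuclideanSpace.proj j).continuous) continuous_const

lemma closedBox_eq_preimage (r : Fin d → ℝ) :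
    closedBox r = WithLp.ofLp ⁻¹' Set.univ.pi fun j => Set.Icc (-r j) (r j) := by
  ext ξ
  simp only [closedBox, Set.mem_ofPred_eq, Set.mem_preimage, Set.mem_univ_pi, Set.mem_Icc, abs_le]

lemma isBounded_closedBox (r : Fin d → ℝ) : Bornology.IsBounded (closedBox r) := by
  rw [closedBox_eq_preimage]
  exact (PiLp.antilipschitzWith_ofLp 2 _).isBounded_preimage
    (Bornology.IsBounded.pi fun j => Metric.isBounded_Icc _ _)

lemma ae_apply_ne (j : Fin d) (c : ℝ) : ∀ᵐ ξ : Ed d, ξ j ≠ c :=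
  (PiLp.volume_preserving_ofLp (Fin d)).quasiMeasurePreserving.ae (p := fun x => x j ≠ c)
    (Measure.ae_eval_ne (fun _ : Fin d => (volume : Measure ℝ)) j c)

lemma ae_eq_zero_off_openBox {M : Type*} [Zero M] {W : Ed d → M} {r : Fin d → ℝ}
    (hW : Function.support W ⊆ closedBox r) : ∀ᵐ ξ, ξ ∉ openBox r → W ξ = 0 := by
  have hedges : ∀ᵐ ξ : Ed d, ∀ j, ξ j ≠ r j ∧ ξ j ≠ -r j :=
    ae_all_iff.2 fun j => (ae_apply_ne j _).and (ae_apply_ne j _)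
  filter_upwards [hedges] with ξ hξ hout
  by_contra hne
  refine hout fun j => lt_of_le_of_ne (hW hne j) fun h => ?_
  exact ((abs_eq (h ▸ abs_nonneg _)).1 h).elim (hξ j).1 (hξ j).2

end Boxes

section Extension

open Topology

variable {X Y γ : Type*} [TopologicalSpace X] [TopologicalSpace Y] [T2Space Y] [Zero γ]

lemma Topology.IsOpenEmbedding.continuous_extend_zero [TopologicalSpace γ] {e : X → Y}
    (he : IsOpenEmbedding e) {f : X → γ} (hf : Continuous f) (hsupp : HasCompactSupport f) :
    Continuous (Function.extend e f 0) :=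
  continuous_of_tsupport fun y hy => by
    obtain ⟨x, -, rfl⟩ := hsupp.tsupport_extend_zero_subset he.continuous hy
    rw [← he.continuousAt_iff, Function.extend_comp he.injective]
    exact hf.continuousAt

lemma HasCompactSupport.restrict_of_tsupport_subset {U : Set X} {f : X → γ}
    (hf : HasCompactSupport f) (hU : tsupport f ⊆ U) : HasCompactSupport (f ∘ ((↑) : U → X)) := by
  refine IsCompact.of_isClosed_subset ?_ (isClosed_tsupport _)
    (tsupport_comp_subset_preimage f continuous_subtype_val)
  rw [Subtype.isCompact_iff, Subtype.image_preimage_coe, Set.inter_eq_right.2 hU]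
  exact hf

lemma exists_continuousMap_comp_eqOn [TopologicalSpace γ] {Φ : X → Y} (hΦ : Continuous Φ)
    (hΦo : IsOpenMap Φ) {U : Set X} (hU : IsOpen U) (hinj : Set.InjOn Φ U) {h : X → γ}
    (hh : Continuous h) (hsupp : HasCompactSupport h) (hhU : tsupport h ⊆ U) :
    ∃ g : C(Y, γ), ∀ x ∈ U, g (Φ x) = h x := by
  have he : IsOpenEmbedding (Φ ∘ ((↑) : U → X)) :=
    .of_continuous_injective_isOpenMap (hΦ.comp continuous_subtype_val) hinj.injective
      (hΦo.comp hU.isOpenMap_subtype_val)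
  refine ⟨⟨_, he.continuous_extend_zero (hh.comp continuous_subtype_val)
    (hsupp.restrict_of_tsupport_subset hhU)⟩, fun x hx => ?_⟩
  exact he.injective.extend_apply _ _ ⟨x, hx⟩

end Extension

section FourierDensity

open UnitAddTorus

variable {ι X : Type*} [Fintype ι] [MeasurableSpace X] {μ : Measure X}

lemma integrable_comp_mul {Φ : X → UnitAddTorus ι} (hΦ : Measurable Φ) {W : X → ℂ}
    (hW : Integrable W μ) (g : C(UnitAddTorus ι, ℂ)) : Integrable (fun x => g (Φ x) * W x) μ :=
  hW.bdd_mul (g.continuous.measurable.comp hΦ).aestronglyMeasurable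
    (Eventually.of_forall fun _ => g.norm_coe_le_norm _)

def integralCompMulCLM {Φ : X → UnitAddTorus ι} (hΦ : Measurable Φ) {W : X → ℂ}
    (hW : Integrable W μ) : C(UnitAddTorus ι, ℂ) →L[ℂ] ℂ :=
  LinearMap.mkContinuous
    { toFun := fun g => ∫ x, g (Φ x) * W x ∂μ
      map_add' := fun g₁ g₂ => by
        simp only [ContinuousMap.add_apply, add_mul]
        exact integral_add (integrable_comp_mul hΦ hW g₁) (integrable_comp_mul hΦ hW g₂)
      map_smul' := fun c g => by
        simp only [ContinuousMap.smul_apply, smul_eq_mul, mul_assoc, RingHom.id_apply]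
        exact integral_const_mul c _ }
    (∫ x, ‖W x‖ ∂μ) fun g => by
      rw [← integral_mul_const]
      refine norm_integral_le_of_norm_le (hW.norm.mul_const ‖g‖) (Eventually.of_forall fun x => ?_)
      rw [norm_mul, mul_comm]
      exact mul_le_mul_of_nonneg_left (g.norm_coe_le_norm _) (norm_nonneg _)

lemma integral_comp_mul_eq_zero_of_mFourier {Φ : X → UnitAddTorus ι} (hΦ : Measurable Φ)
    {W : X → ℂ} (hW : Integrable W μ) (h : ∀ n, ∫ x, mFourier n (Φ x) * W x ∂μ = 0)
    (g : C(UnitAddTorus ι, ℂ)) : ∫ x, g (Φ x) * W x ∂μ = 0 := by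
  let L : C(UnitAddTorus ι, ℂ) →ₗ[ℂ] ℂ := integralCompMulCLM hΦ hW
  have hspan : Submodule.span ℂ (Set.range mFourier) ≤ LinearMap.ker L := by
    rw [Submodule.span_le]
    rintro _ ⟨n, rfl⟩
    exact h n
  have hker : ⊤ ≤ LinearMap.ker L := by
    rw [← span_mFourier_closure_eq_top]
    exact Submodule.topologicalClosure_minimal _ hspan (integralCompMulCLM hΦ hW).isClosed_ker
  exact hker Submodule.mem_top

end FourierDensity

section Torus

open UnitAddTorus

variable {d : ℕ}

/-- `ξ` modulo the period lattice `∏ⱼ 2 sⱼ ℤ`, rescaled onto the unit torus. -/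
def toTorus (s : Fin d → ℝ) (ξ : Ed d) : UnitAddTorus (Fin d) :=
  fun j => ((ξ j / (2 * s j) : ℝ) : AddCircle (1 : ℝ))

lemma continuous_toTorus (s : Fin d → ℝ) : Continuous (toTorus s) :=
  continuous_pi fun j =>
    (AddCircle.continuous_mk' 1).comp ((EuclideanSpace.proj j).continuous.div_const _)

lemma isOpenMap_toTorus {s : Fin d → ℝ} (hs : ∀ j, s j ≠ 0) : IsOpenMap (toTorus s) := by
  have hcoord : ∀ j, IsOpenMap fun t : ℝ => ((t / (2 * s j) : ℝ) : AddCircle (1 : ℝ)) := fun j =>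
    QuotientAddGroup.isOpenQuotientMap_mk.isOpenMap.comp
      (Homeomorph.mulRight₀ _ (inv_ne_zero (mul_ne_zero two_ne_zero (hs j)))).isOpenMap
  exact (IsOpenMap.piMap hcoord (by simp)).comp
    (PiLp.continuousLinearEquiv 2 ℝ fun _ : Fin d => ℝ).toHomeomorph.isOpenMap

lemma injOn_toTorus {s : Fin d → ℝ} (hs : ∀ j, 0 < s j) : Set.InjOn (toTorus s) (openBox s) := by
  intro ξ hξ η hη h
  refine WithLp.ofLp_injective 2 (funext fun j => ?_)
  have h2s : 0 < 2 * s j := by linarith [hs j]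
  have hmem : ∀ ζ ∈ openBox s, ζ j / (2 * s j) ∈ Set.Ico (-(1 / 2)) (-(1 / 2) + 1) := by
    intro ζ hζ
    obtain ⟨hlo, hhi⟩ := abs_lt.1 (hζ j)
    constructor
    · rw [le_div_iff₀ h2s]; linarith
    · rw [div_lt_iff₀ h2s]; linarith
  have hscaled := (AddCircle.coe_eq_coe_iff_of_mem_Ico (hmem ξ hξ) (hmem η hη)).1 (congr_fun h j)
  exact (div_left_inj' h2s.ne').1 hscaled

lemma mFourier_toTorus (s : Fin d → ℝ) (n : Fin d → ℤ) (ξ : Ed d) :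
    mFourier n (toTorus s ξ) = 𝐞 (inner ℝ ξ (latticePt d s n)) := by
  simp only [mFourier, ContinuousMap.coe_mk, toTorus, fourier_coe_apply, fourierChar_apply,
    ← Complex.exp_sum, latticePt, PiLp.inner_apply]
  congr 1
  push_cast
  rw [Finset.mul_sum, Finset.sum_mul]
  refine Finset.sum_congr rfl fun j _ => ?_
  simp only [div_one, WithLp.equiv_symm_apply, RCLike.inner_apply, conj_trivial,
    Complex.ofReal_mul, Complex.ofReal_div, Complex.ofReal_intCast, Complex.ofReal_ofNat]
  ring

theorem ae_eq_zero_of_fourierInv_latticePt_eq_zero {s : Fin d → ℝ} (hs : ∀ j, 0 < s j)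
    {W : Ed d → ℂ} (hW : Integrable W) (hWB : ∀ᵐ ξ, ξ ∉ openBox s → W ξ = 0)
    (hzero : ∀ n, 𝓕⁻ W (latticePt d s n) = 0) : W =ᵐ[volume] 0 := by
  have hchar : ∀ n, ∫ ξ, mFourier n (toTorus s ξ) * W ξ = 0 := fun n => by
    simpa only [mFourier_toTorus, fourierInv_eq, Circle.smul_def, smul_eq_mul] using hzero n
  have hcont := integral_comp_mul_eq_zero_of_mFourier (continuous_toTorus s).measurable hW hchar
  -- A test function supported in the open box, on which `toTorus s` is injective, descends to a
  -- continuous function on the torus.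
  have hinside : ∀ᵐ ξ, ξ ∈ openBox s → W ξ = 0 := by
    refine (isOpen_openBox s).ae_eq_zero_of_integral_contDiff_smul_eq_zero
      (hW.locallyIntegrable.locallyIntegrableOn _) fun h hh hsupp hhB => ?_
    obtain ⟨g, hg⟩ := exists_continuousMap_comp_eqOn (continuous_toTorus s)
      (isOpenMap_toTorus fun j => (hs j).ne') (isOpen_openBox s) (injOn_toTorus hs)
      (Complex.continuous_ofReal.comp hh.continuous) (hsupp.comp_left Complex.ofReal_zero)
      ((tsupport_comp_subset Complex.ofReal_zero h).trans hhB)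
    rw [← hcont g]
    refine integral_congr_ae ?_
    filter_upwards [hWB] with ξ hξ
    by_cases hξB : ξ ∈ openBox s
    · rw [hg ξ hξB, Complex.real_smul, Function.comp_apply]
    · rw [hξ hξB, smul_zero, mul_zero]
  filter_upwards [hinside, hWB] with ξ h₁ h₂
  by_cases hξB : ξ ∈ openBox s
  exacts [h₁ hξB, h₂ hξB]

end Torus

section Entire

open Complex (exp I)

lemma differentiable_integral_mul_cexp {α : Type*} [MeasurableSpace α] {μ : Measure α}
    {w φ : α → ℂ} (hw : Integrable w μ) (hφ : AEStronglyMeasurable φ μ) {C : ℝ}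
    (hC : ∀ a, w a ≠ 0 → ‖φ a‖ ≤ C) : Differentiable ℂ fun z => ∫ a, w a * exp (z * φ a) ∂μ := by
  intro z₀
  set B := rexp ((‖z₀‖ + 1) * C)
  have hexp : ∀ z ∈ Metric.ball z₀ 1, ∀ a, ‖w a‖ * ‖exp (z * φ a)‖ ≤ ‖w a‖ * B := by
    intro z hz a
    rcases eq_or_ne (w a) 0 with ha | ha
    · simp [ha]
    refine mul_le_mul_of_nonneg_left ((Complex.norm_exp_le_exp_norm _).trans
      (Real.exp_le_exp.2 ?_)) (norm_nonneg _)
    have hz : ‖z‖ ≤ ‖z₀‖ + 1 :=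
      (norm_le_insert' z z₀).trans (by linarith [mem_ball_iff_norm.1 hz])
    rw [norm_mul]
    exact mul_le_mul hz (hC a ha) (norm_nonneg _) (by positivity)
  have hmeas : ∀ z, AEStronglyMeasurable (fun a => w a * exp (z * φ a)) μ := fun z =>
    hw.aestronglyMeasurable.mul (Complex.continuous_exp.comp_aestronglyMeasurable (hφ.const_mul z))
  refine (hasDerivAt_integral_of_dominated_loc_of_deriv_le
    (F' := fun z a => w a * (exp (z * φ a) * φ a)) (bound := fun a => ‖w a‖ * B * C)
    (Metric.ball_mem_nhds z₀ one_pos) (Eventually.of_forall hmeas) ?_ ?_ ?_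
    (hw.norm.mul_const B |>.mul_const C) ?_).2.differentiableAt
  · refine Integrable.mono' (hw.norm.mul_const B) (hmeas z₀) (Eventually.of_forall fun a => ?_)
    rw [norm_mul]
    exact hexp z₀ (Metric.mem_ball_self one_pos) a
  · exact hw.aestronglyMeasurable.mul
      ((Complex.continuous_exp.comp_aestronglyMeasurable (hφ.const_mul z₀)).mul hφ)
  · refine Eventually.of_forall fun a z hz => ?_
    rcases eq_or_ne (w a) 0 with ha | ha
    · simp [ha]
    rw [norm_mul, norm_mul, ← mul_assoc]
    exact mul_le_mul (hexp z hz a) (hC a ha) (norm_nonneg _) (by positivity)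
  · exact Eventually.of_forall fun a z _ =>
      ((hasDerivAt_mul_const (φ a)).cexp.const_mul (w a))

lemma exists_differentiable_eq_fourierInv_line {E : Type*} [NormedAddCommGroup E]
    [InnerProductSpace ℝ E] [FiniteDimensional ℝ E] [MeasurableSpace E] [BorelSpace E]
    {W : E → ℂ} (hW : Integrable W) (hb : Bornology.IsBounded (Function.support W)) (x e : E) :
    ∃ F : ℂ → ℂ, Differentiable ℂ F ∧ ∀ t : ℝ, F t = 𝓕⁻ W (x + t • e) := by
  obtain ⟨R, hR⟩ := hb.subset_closedBall 0
  have hchar : Continuous fun ξ : E => (𝐞 (inner ℝ ξ x) : ℂ) :=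
    continuous_subtype_val.comp (continuous_fourierChar.comp (continuous_id.inner continuous_const))
  refine ⟨fun z => ∫ ξ, (𝐞 (inner ℝ ξ x) * W ξ) * exp (z * (2 * π * I * inner ℝ ξ e)),
    differentiable_integral_mul_cexp (C := 2 * π * (R * ‖e‖))
      (hW.bdd_mul hchar.aestronglyMeasurable (Eventually.of_forall fun ξ => (Circle.norm_coe _).le))
      (by fun_prop) fun ξ hξ => ?_, fun t => ?_⟩
  · have hξR : ‖ξ‖ ≤ R := by
      simpa using hR (Function.mem_support.2 (right_ne_zero_of_mul hξ))
    simp only [norm_mul, Complex.norm_ofNat, Complex.norm_real, Complex.norm_I, mul_one,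
      Real.norm_eq_abs, abs_of_pos pi_pos]
    gcongr
    exact (abs_real_inner_le_norm ξ e).trans (by gcongr)
  · rw [fourierInv_eq]
    refine integral_congr_ae (Eventually.of_forall fun ξ => ?_)
    simp only [Circle.smul_def, smul_eq_mul, fourierChar_apply, inner_add_right,
      real_inner_smul_right]
    rw [mul_right_comm, ← Complex.exp_add]
    congr 2
    push_cast
    ring

end Entire

section Identity

lemma eq_zero_of_mul_eq_zero_on_real {F G : ℂ → ℂ} (hF : Differentiable ℂ F)
    (hG : Differentiable ℂ G) (hFG : ∀ t : ℝ, F t * G t = 0) (hF0 : F 0 ≠ 0) : G = 0 := by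
  have hnear : ∀ᶠ t : ℝ in 𝓝 0, G t = 0 := by
    have hFne : ∀ᶠ t : ℝ in 𝓝 0, F t ≠ 0 :=
      (hF.continuous.comp Complex.continuous_ofReal).continuousAt.eventually_ne (by simpa using hF0)
    exact hFne.mono fun t ht => (mul_eq_zero.1 (hFG t)).resolve_left ht
  have hreal : Tendsto ((↑) : ℝ → ℂ) (𝓝[≠] 0) (𝓝[≠] 0) :=
    tendsto_nhdsWithin_of_tendsto_nhds_of_eventually_within _
      ((Complex.continuous_ofReal.tendsto' 0 0 Complex.ofReal_zero).mono_left nhdsWithin_le_nhds)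
      (eventually_nhdsWithin_of_forall fun t ht => Complex.ofReal_ne_zero.2 ht)
  have hfreq : ∃ᶠ z in 𝓝[≠] (0 : ℂ), G z = 0 :=
    hreal.frequently (hnear.filter_mono nhdsWithin_le_nhds).frequently
  funext z
  have hGan : AnalyticOnNhd ℂ G Set.univ := hG.differentiableOn.analyticOnNhd isOpen_univ
  exact hGan.eqOn_zero_of_preconnected_of_frequently_eq_zero isPreconnected_univ
    (Set.mem_univ 0) hfreq (Set.mem_univ z)

lemma fourierInv_eq_zero_or_of_mul_eq_zero {E : Type*} [NormedAddCommGroup E]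
    [InnerProductSpace ℝ E] [FiniteDimensional ℝ E] [MeasurableSpace E] [BorelSpace E]
    {U V : E → ℂ} (hU : Integrable U) (hV : Integrable V)
    (hUb : Bornology.IsBounded (Function.support U))
    (hVb : Bornology.IsBounded (Function.support V))
    (h : ∀ x, 𝓕⁻ U x * 𝓕⁻ V x = 0) : 𝓕⁻ U = 0 ∨ 𝓕⁻ V = 0 := by
  refine or_iff_not_imp_left.2 fun hU0 => ?_
  obtain ⟨a, ha⟩ := Function.ne_iff.1 hU0
  funext b
  obtain ⟨F, hF, hFU⟩ := exists_differentiable_eq_fourierInv_line hU hUb a (b - a)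
  obtain ⟨G, hG, hGV⟩ := exists_differentiable_eq_fourierInv_line hV hVb a (b - a)
  have hG0 := eq_zero_of_mul_eq_zero_on_real hF hG (fun t => by rw [hFU, hGV]; exact h _)
    (by simpa [← Complex.ofReal_zero, hFU] using ha)
  simpa [hG0] using (hGV 1).symm

end Identity

theorem stmt1_general (d : ℕ) (u v : Ed d → ℂ)
    (s : Fin d → ℝ) (hs : ∀ j, 1 ≤ s j)
    (hubl : ∃ U : Ed d → ℂ, Integrable U ∧
      (∀ ξ : Ed d, (∃ j, (1:ℝ)/2 < |ξ j|) → U ξ = 0) ∧ ∀ x, u x = 𝓕⁻ U x)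
    (hvbl : ∃ V : Ed d → ℂ, Integrable V ∧
      (∀ ξ : Ed d, (∃ j, (1:ℝ)/2 < |ξ j|) → V ξ = 0) ∧ ∀ x, v x = 𝓕⁻ V x)
    (hw : ∀ n : Fin d → ℤ, u (latticePt d s n) * v (latticePt d s n) = 0) :
    u = 0 ∨ v = 0 := by
  obtain ⟨U, hU, hUsupp, hu⟩ := hubl
  obtain ⟨V, hV, hVsupp, hv⟩ := hvbl
  obtain rfl : u = 𝓕⁻ U := funext hu
  obtain rfl : v = 𝓕⁻ V := funext hv
  have hUbox := support_subset_closedBox hUsupp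
  have hVbox := support_subset_closedBox hVsupp
  have hWbox : Function.support (U ⋆[ContinuousLinearMap.mul ℂ ℂ] V) ⊆ closedBox s :=
    (support_convolution_subset _).trans <| (Set.add_subset_add hUbox hVbox).trans <|
      (add_closedBox_subset _ _).trans fun ξ hξ j => (hξ j).trans (by norm_num [hs j])
  have hW0 : U ⋆[ContinuousLinearMap.mul ℂ ℂ] V =ᵐ[volume] 0 :=
    ae_eq_zero_of_fourierInv_latticePt_eq_zero (fun j => one_pos.trans_le (hs j))
      (hU.integrable_convolution _ hV) (ae_eq_zero_off_openBox hWbox)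
      fun n => (fourierInv_mul_convolution_eq hU hV _).trans (hw n)
  refine fourierInv_eq_zero_or_of_mul_eq_zero hU hV ((isBounded_closedBox _).subset hUbox)
    ((isBounded_closedBox _).subset hVbox) fun x => ?_
  rw [← fourierInv_mul_convolution_eq hU hV, fourierInv_eq]
  exact integral_eq_zero_of_ae (hW0.mono fun ξ h => by simp [h])

theorem stmt1 (d : ℕ) (u v : Ed d → ℂ)
    (s : Fin d → ℝ) (hs : ∀ j, 1 ≤ s j)
    (hu2 : MemLp u 2 volume) (hv2 : MemLp v 2 volume)
    (hubl : ∃ U : Ed d → ℂ, Integrable U ∧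
      (∀ ξ : Ed d, (∃ j, (1:ℝ)/2 < |ξ j|) → U ξ = 0) ∧ ∀ x, u x = 𝓕⁻ U x)
    (hvbl : ∃ V : Ed d → ℂ, Integrable V ∧
      (∀ ξ : Ed d, (∃ j, (1:ℝ)/2 < |ξ j|) → V ξ = 0) ∧ ∀ x, v x = 𝓕⁻ V x)
    (hw : ∀ n : Fin d → ℤ, u (latticePt d s n) * v (latticePt d s n) = 0) :
    u = 0 ∨ v = 0 :=
  stmt1_general d u v s hs hubl hvbl hw
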